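/- Let d ≥ 1 and let F : ℝ^d ⇒ ℝ^d be a cyclically quasi-monotone multi-map with full domain. Then: (i) the relation ≺_F is irreflexive and transitive (hence asymmetric); (ii) the relation ⪯_F is reflexive and transitive; (iii) for every x, y, x ≺_F y implies x ⪯_F y; (iv) for every x, y, z, if x ≺_F y and y ⪯_F z then x ≺_F z. -/

import Mathlib

open scoped RealInnerProductSpace

/-- Cyclic quasi-monotonicity of a multi-map `F : ℝ^d ⇒ ℝ^d`. -/
def CyclicallyQuasiMonotone {d : ℕ}
    (F : EuclideanSpace ℝ (Fin d) → Set (EuclideanSpace ℝ (Fin d))) : Prop :=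
  ∀ (N : ℕ) (x p : ℕ → EuclideanSpace ℝ (Fin d)),
    0 < N → x N = x 0 → (∀ i < N, p i ∈ F (x i)) →
    ∃ i < N, ⟪p i, x (i + 1) - x i⟫ ≤ 0

/-- `x 0, …, x N` is an `F`-ascending path. -/
def AscendingPath {d : ℕ} (F : EuclideanSpace ℝ (Fin d) → Set (EuclideanSpace ℝ (Fin d)))
    (x : ℕ → EuclideanSpace ℝ (Fin d)) (N : ℕ) : Prop :=
  ∀ i < N, ∃ p ∈ F (x i), 0 < ⟪p, x (i + 1) - x i⟫

/-- `a ≺_F b`: there is an `F`-ascending path from `a` to `b`. -/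
def PrecF {d : ℕ} (F : EuclideanSpace ℝ (Fin d) → Set (EuclideanSpace ℝ (Fin d)))
    (a b : EuclideanSpace ℝ (Fin d)) : Prop :=
  ∃ (N : ℕ) (x : ℕ → EuclideanSpace ℝ (Fin d)),
    0 < N ∧ x 0 = a ∧ x N = b ∧ AscendingPath F x N

/-- `a ⪯_F b`: `{w : w ≺_F a} ⊆ {w : w ≺_F b}`. -/
def PreceqF {d : ℕ} (F : EuclideanSpace ℝ (Fin d) → Set (EuclideanSpace ℝ (Fin d)))
    (a b : EuclideanSpace ℝ (Fin d)) : Prop :=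
  ∀ w, PrecF F w a → PrecF F w b

/-- The convex set `C^F(x) = {w : w ⪯_F x}`. -/
def CF {d : ℕ} (F : EuclideanSpace ℝ (Fin d) → Set (EuclideanSpace ℝ (Fin d)))
    (x : EuclideanSpace ℝ (Fin d)) : Set (EuclideanSpace ℝ (Fin d)) :=
  {w | PreceqF F w x}

/-!
Concatenating ascending paths makes `≺_F` transitive, and cyclic quasi-monotonicity says
precisely that no ascending path is a cycle, i.e. that `≺_F` is irreflexive. All statements
about `⪯_F` then follow formally from its definition as inclusion of lower sets of `≺_F`.
-/

variable {d : ℕ} {F : EuclideanSpace ℝ (Fin d) → Set (EuclideanSpace ℝ (Fin d))}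

namespace AscendingPath

theorem exists_selection {x : ℕ → EuclideanSpace ℝ (Fin d)} {N : ℕ}
    (hx : AscendingPath F x N) :
    ∃ p : ℕ → EuclideanSpace ℝ (Fin d),
      ∀ i < N, p i ∈ F (x i) ∧ 0 < ⟪p i, x (i + 1) - x i⟫ := by
  have h : ∀ i, ∃ p, i < N → p ∈ F (x i) ∧ 0 < ⟪p, x (i + 1) - x i⟫ := by
    intro i
    by_cases hi : i < N
    · obtain ⟨p, hpF, hp⟩ := hx i hi
      exact ⟨p, fun _ => ⟨hpF, hp⟩⟩
    · exact ⟨0, fun h => absurd h hi⟩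
  choose p hp using h
  exact ⟨p, hp⟩

theorem append {x y : ℕ → EuclideanSpace ℝ (Fin d)} {N M : ℕ}
    (hx : AscendingPath F x N) (hy : AscendingPath F y M) (hxy : x N = y 0) :
    AscendingPath F (fun i => if i ≤ N then x i else y (i - N)) (N + M) := by
  intro i hi
  rcases lt_or_ge i N with hiN | hNi
  · simpa [hiN.le, Nat.succ_le_of_lt hiN] using hx i hiN
  · have hstart : (if i ≤ N then x i else y (i - N)) = y (i - N) := by
      split_ifs with h
      · obtain rfl : i = N := le_antisymm h hNi
        simpa using hxy
      · rfl
    have hnext : i + 1 - N = i - N + 1 := by omega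
    simpa only [hstart, if_neg (show ¬ i + 1 ≤ N by omega), hnext] using hy (i - N) (by omega)

end AscendingPath

theorem PrecF.trans {a b c : EuclideanSpace ℝ (Fin d)} (hab : PrecF F a b)
    (hbc : PrecF F b c) : PrecF F a c := by
  obtain ⟨N, x, hN, rfl, hxN, hx⟩ := hab
  obtain ⟨M, y, hM, hy0, rfl, hy⟩ := hbc
  refine ⟨N + M, _, by omega, by simp, ?_, hx.append hy (hxN.trans hy0.symm)⟩
  simp [show ¬ N + M ≤ N by omega]

theorem PrecF.preceqF {a b : EuclideanSpace ℝ (Fin d)} (hab : PrecF F a b) :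
    PreceqF F a b :=
  fun _ hwa => hwa.trans hab

theorem PreceqF.refl (a : EuclideanSpace ℝ (Fin d)) : PreceqF F a a :=
  fun _ => id

theorem PreceqF.trans {a b c : EuclideanSpace ℝ (Fin d)} (hab : PreceqF F a b)
    (hbc : PreceqF F b c) : PreceqF F a c :=
  fun w hwa => hbc w (hab w hwa)

theorem PrecF.trans_preceqF {a b c : EuclideanSpace ℝ (Fin d)} (hab : PrecF F a b)
    (hbc : PreceqF F b c) : PrecF F a c :=
  hbc a hab

namespace CyclicallyQuasiMonotone

theorem not_precF_self (hF : CyclicallyQuasiMonotone F) (a : EuclideanSpace ℝ (Fin d)) :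
    ¬ PrecF F a a := by
  rintro ⟨N, x, hN, hx0, hxN, hx⟩
  obtain ⟨p, hp⟩ := hx.exists_selection
  obtain ⟨i, hi, hle⟩ := hF N x p hN (hxN.trans hx0.symm) fun i hi => (hp i hi).1
  exact (hp i hi).2.not_ge hle

theorem precF_asymm (hF : CyclicallyQuasiMonotone F) {a b : EuclideanSpace ℝ (Fin d)}
    (hab : PrecF F a b) : ¬ PrecF F b a :=
  fun hba => hF.not_precF_self a (hab.trans hba)

end CyclicallyQuasiMonotone

theorem stmt5 (d : ℕ)
    (F : EuclideanSpace ℝ (Fin d) → Set (EuclideanSpace ℝ (Fin d)))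
    (hF : CyclicallyQuasiMonotone F) :
    (∀ x, ¬ PrecF F x x) ∧
    (∀ x y z, PrecF F x y → PrecF F y z → PrecF F x z) ∧
    (∀ x y, PrecF F x y → ¬ PrecF F y x) ∧
    (∀ x, PreceqF F x x) ∧
    (∀ x y z, PreceqF F x y → PreceqF F y z → PreceqF F x z) ∧
    (∀ x y, PrecF F x y → PreceqF F x y) ∧
    (∀ x y z, PrecF F x y → PreceqF F y z → PrecF F x z) :=
  ⟨hF.not_precF_self, fun _ _ _ => PrecF.trans, fun _ _ => hF.precF_asymm, PreceqF.refl,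
    fun _ _ _ => PreceqF.trans, fun _ _ => PrecF.preceqF, fun _ _ _ => PrecF.trans_preceqF⟩
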